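/- Let ε ∈ (0, 1/2), k ∈ ℕ, and n_k = ⌈k/(1−2ε)⌉. If the sender runs the feedback protocol for message x and the receiver gets y ∈ {0,1,←}^{n_k} with at most ε·n_k symbols received incorrectly, then decode(y)[:k] = x[:k]. -/
import Mathlib


/-! Dynamic error correcting code with feedback.
Codeword symbols are `Option Bool`: `some b` is the bit `b`, `none` is the
backspace symbol `←`. -/

/-- `decode` interprets `←` (`none`) as a backspace. -/
def decode (y : List (Option Bool)) : List Bool :=
  y.foldl (fun d s => match s with | some b => d ++ [b] | none => d.dropLast) []

/-- `last(x,y)`: the length of the longest common prefix of `x` and `decode y`,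
i.e. the largest `i` with `x[:i] = decode(y)[:i]`. -/
def lastAgree (x : List Bool) (y : List (Option Bool)) : ℕ :=
  ((x.zip (decode y)).takeWhile (fun p => p.1 == p.2)).length

/-- `suff(x,y) = len(decode y) − last(x,y)`, the length of the wrong suffix. -/
def suff (x : List Bool) (y : List (Option Bool)) : ℕ :=
  (decode y).length - lastAgree x y

/-- The potential `Φ(x,y) = last(x,y) − suff(x,y)` (as an integer). -/
def Phi (x : List Bool) (y : List (Option Bool)) : ℤ :=
  (lastAgree x y : ℤ) - (suff x y : ℤ)

/-- The symbol the sender transmits next: `←` if `suff(x,y) > 0`, and otherwise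
the next bit of the message, `x[last(x,y)+1]`. -/
def nextSym (x : List Bool) (y : List (Option Bool)) : Option Bool :=
  if 0 < suff x y then none else some (x.getD (lastAgree x y) false)

/-- The next symbol is well defined: when `suff = 0` the message is not yet
exhausted. -/
def Sendable (x : List Bool) (y : List (Option Bool)) : Prop :=
  suff x y = 0 → lastAgree x y < x.length

def lcp : List Bool → List Bool → ℕ
  | a :: x, b :: d => if a = b then lcp x d + 1 else 0
  | _, _ => 0

lemma lcp_nil_right (x : List Bool) : lcp x [] = 0 := by cases x <;> rfl

lemma lastAgree_eq (x : List Bool) (y : List (Option Bool)) :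
    lastAgree x y = lcp x (decode y) := by
  unfold lastAgree
  generalize decode y = d
  induction x generalizing d with
  | nil => simp [lcp]
  | cons a x ih =>
    cases d with
    | nil => simp [lcp_nil_right]
    | cons b d =>
      by_cases h : a = b <;> simp [lcp, h, ih]

lemma lcp_le_left : ∀ x d : List Bool, lcp x d ≤ x.length := by
  intro x
  induction x with
  | nil => intro d; simp [lcp]
  | cons a x ih =>
    intro d
    cases d with
    | nil => simp [lcp_nil_right]
    | cons b d =>
      by_cases h : a = b <;> simp [lcp, h]
      exact ih d

lemma lcp_le_right : ∀ x d : List Bool, lcp x d ≤ d.length := by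
  intro x
  induction x with
  | nil => intro d; simp [lcp]
  | cons a x ih =>
    intro d
    cases d with
    | nil => simp [lcp_nil_right]
    | cons b d =>
      by_cases h : a = b <;> simp [lcp, h]
      exact ih d

lemma take_lcp : ∀ x d : List Bool, x.take (lcp x d) = d.take (lcp x d) := by
  intro x
  induction x with
  | nil => intro d; simp [lcp]
  | cons a x ih =>
    intro d
    cases d with
    | nil => simp [lcp_nil_right]
    | cons b d =>
      by_cases h : a = b <;> simp [lcp, h]
      exact ih d

lemma le_lcp : ∀ (n : ℕ) (x d : List Bool), n ≤ x.length → n ≤ d.length →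
    x.take n = d.take n → n ≤ lcp x d := by
  intro n
  induction n with
  | zero => intros; simp
  | succ n ih =>
    intro x d hx hd ht
    cases x with
    | nil => simp at hx
    | cons a x =>
      cases d with
      | nil => simp at hd
      | cons b d =>
        simp only [List.take_succ_cons, List.cons.injEq] at ht
        simp only [lcp, ht.1, if_true]
        exact Nat.succ_le_succ (ih x d (Nat.le_of_succ_le_succ hx)
          (Nat.le_of_succ_le_succ hd) ht.2)

lemma decode_concat_some (y : List (Option Bool)) (b : Bool) :
    decode (y ++ [some b]) = decode y ++ [b] := by
  simp [decode, List.foldl_append]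

lemma decode_concat_none (y : List (Option Bool)) :
    decode (y ++ [none]) = (decode y).dropLast := by
  simp [decode, List.foldl_append]

lemma phi_eq (x : List Bool) (y : List (Option Bool)) :
    Phi x y = 2 * (lcp x (decode y) : ℤ) - (decode y).length := by
  have h := lcp_le_right x (decode y)
  unfold Phi suff
  rw [lastAgree_eq]
  omega

lemma phi_step_any (x : List Bool) (y : List (Option Bool)) (s : Option Bool) :
    Phi x y - 1 ≤ Phi x (y ++ [s]) := by
  rw [phi_eq, phi_eq]
  have hL := lcp_le_right x (decode y)
  have hLx := lcp_le_left x (decode y)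
  have ht := take_lcp x (decode y)
  cases s with
  | some b =>
    rw [decode_concat_some]
    have h1 : lcp x (decode y) ≤ lcp x (decode y ++ [b]) := by
      apply le_lcp _ _ _ hLx (by simp; omega)
      rw [List.take_append_of_le_length hL]
      exact ht
    simp only [List.length_append, List.length_singleton]
    push_cast
    omega
  | none =>
    rw [decode_concat_none]
    have h1 : lcp x (decode y) - 1 ≤ lcp x ((decode y).dropLast) := by
      apply le_lcp _ _ _ (by omega) (by rw [List.length_dropLast]; omega)
      rw [List.dropLast_eq_take]
      rw [List.take_take]
      rw [Nat.min_eq_left (by omega)]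
      calc x.take (lcp x (decode y) - 1)
          = (x.take (lcp x (decode y))).take (lcp x (decode y) - 1) := by
            rw [List.take_take, Nat.min_eq_left (by omega)]
        _ = ((decode y).take (lcp x (decode y))).take (lcp x (decode y) - 1) := by rw [ht]
        _ = (decode y).take (lcp x (decode y) - 1) := by
            rw [List.take_take, Nat.min_eq_left (by omega)]
    rw [List.length_dropLast]
    omega

lemma phi_step_correct (x : List Bool) (y : List (Option Bool)) (hs : Sendable x y) :
    Phi x y + 1 ≤ Phi x (y ++ [nextSym x y]) := by
  have hL := lcp_le_right x (decode y)
  have hLx := lcp_le_left x (decode y)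
  have ht := take_lcp x (decode y)
  unfold nextSym
  by_cases h : 0 < suff x y
  · rw [if_pos h]
    rw [phi_eq, phi_eq, decode_concat_none]
    have hlt : lcp x (decode y) < (decode y).length := by
      unfold suff at h; rw [lastAgree_eq] at h; omega
    have h1 : lcp x (decode y) ≤ lcp x ((decode y).dropLast) := by
      apply le_lcp _ _ _ hLx (by rw [List.length_dropLast]; omega)
      rw [List.dropLast_eq_take, List.take_take, Nat.min_eq_left (by omega)]
      exact ht
    rw [List.length_dropLast]
    omega
  · rw [if_neg h]
    have heq : lcp x (decode y) = (decode y).length := by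
      unfold suff at h; rw [lastAgree_eq] at h; omega
    have hxlt : lastAgree x y < x.length := hs (by unfold suff; rw [lastAgree_eq]; omega)
    rw [lastAgree_eq] at hxlt
    rw [phi_eq, phi_eq, decode_concat_some, lastAgree_eq]
    have hd : decode y = x.take (lcp x (decode y)) := by
      rw [ht, heq, List.take_length]
    set L := lcp x (decode y) with hLdef
    have hx1 : x.take (L + 1) = decode y ++ [x.getD L false] := by
      conv_lhs => rw [List.take_succ]
      rw [hd]
      congr 1
      have : x[L]? = some (x.getD L false) := by
        rw [List.getD_eq_getElem?_getD, List.getElem?_eq_getElem hxlt]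
        simp
      rw [this]
      rfl
    have h1 : L + 1 ≤ lcp x (decode y ++ [x.getD L false]) := by
      apply le_lcp _ _ _ (by omega) (by simp; omega)
      rw [hx1, List.take_of_length_le (by simp; omega)]
    simp only [List.length_append, List.length_singleton]
    push_cast
    omega

lemma phi_lower (x : List Bool) (y : List (Option Bool))
    (hsend : ∀ i < y.length, Sendable x (y.take i)) :
    ∀ i ≤ y.length,
      (i : ℤ) - 2 * (((List.range i).filter
        (fun j => y.getD j none ≠ nextSym x (y.take j))).length : ℤ) ≤ Phi x (y.take i) := by
  intro i
  induction i with
  | zero =>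
    intro _
    simp [Phi, lastAgree, suff, decode]
  | succ i ih =>
    intro hi
    have hi' : i < y.length := by omega
    have hih := ih (le_of_lt hi')
    have hgetD : y.getD i none = y[i] := by
      rw [List.getD_eq_getElem?_getD, List.getElem?_eq_getElem hi']
      rfl
    have htake : y.take (i + 1) = y.take i ++ [y[i]] := by
      rw [List.take_succ, List.getElem?_eq_getElem hi']
      rfl
    have hrange : (List.range (i+1)).filter
        (fun j => y.getD j none ≠ nextSym x (y.take j))
        = ((List.range i).filter (fun j => y.getD j none ≠ nextSym x (y.take j)))
          ++ (List.filter (fun j => y.getD j none ≠ nextSym x (y.take j)) [i]) := by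
      rw [List.range_succ, List.filter_append]
    by_cases hc : y.getD i none = nextSym x (y.take i)
    · have hE : ((List.range (i+1)).filter
          (fun j => y.getD j none ≠ nextSym x (y.take j))).length
          = ((List.range i).filter (fun j => y.getD j none ≠ nextSym x (y.take j))).length := by
        rw [hrange, List.length_append]
        have hc' : y[i]?.getD none = nextSym x (y.take i) := by
          rw [← List.getD_eq_getElem?_getD]; exact hc
        simp [hc']
      rw [hE]
      have hstep := phi_step_correct x (y.take i) (hsend i hi')
      rw [← hgetD, hc] at htake
      rw [htake]
      push_cast
      push_cast at hih
      omega
    · have hE : ((List.range (i+1)).filter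
          (fun j => y.getD j none ≠ nextSym x (y.take j))).length
          = ((List.range i).filter (fun j => y.getD j none ≠ nextSym x (y.take j))).length + 1 := by
        rw [hrange, List.length_append]
        have hc' : ¬ (y[i]?.getD none = nextSym x (y.take i)) := by
          rw [← List.getD_eq_getElem?_getD]; exact hc
        simp [hc']
      rw [hE]
      have hstep := phi_step_any x (y.take i) y[i]
      rw [htake]
      push_cast
      push_cast at hih
      omega

/-- For `ε ∈ (0, 1/2)` and `n_k = ⌈k/(1−2ε)⌉`: if the sender runs the feedback
protocol for a message `x` of length at least `k`, and among the `n_k` received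
symbols at most `ε·n_k` are incorrect, then the first `k` decoded bits equal
the first `k` message bits. -/
theorem decode_prefix_correct (ε : ℝ) (hε : ε ∈ Set.Ioo (0 : ℝ) (1 / 2))
    (k : ℕ) (x : List Bool) (hk : k ≤ x.length)
    (y : List (Option Bool)) (hn : (y.length : ℝ) = ⌈(k : ℝ) / (1 - 2 * ε)⌉)
    (hsend : ∀ i < y.length, Sendable x (y.take i))
    (herr : (((List.range y.length).filter
        (fun i => y.getD i none ≠ nextSym x (y.take i))).length : ℝ)
        ≤ ε * y.length) :
    (decode y).take k = x.take k := by
  set E := ((List.range y.length).filter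
      (fun i => y.getD i none ≠ nextSym x (y.take i))).length with hE
  have hphi : (y.length : ℤ) - 2 * E ≤ Phi x y := by
    have := phi_lower x y hsend y.length le_rfl
    rwa [List.take_length] at this
  have hεpos : 0 < 1 - 2 * ε := by
    have := hε.2; simp at this ⊢; linarith
  have hceil : (k : ℝ) / (1 - 2 * ε) ≤ (y.length : ℝ) := by
    rw [hn]; exact Int.le_ceil _
  have hkn : (k : ℝ) ≤ (1 - 2 * ε) * y.length := by
    rw [div_le_iff₀ hεpos] at hceil
    linarith
  have hreal : (k : ℝ) ≤ (y.length : ℝ) - 2 * E := by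
    nlinarith [herr]
  have hint : (k : ℤ) ≤ (y.length : ℤ) - 2 * E := by
    exact_mod_cast hreal
  have hPhik : (k : ℤ) ≤ Phi x y := le_trans hint hphi
  rw [phi_eq] at hPhik
  have hL2 := lcp_le_right x (decode y)
  have hkL : k ≤ lcp x (decode y) := by omega
  have ht := take_lcp x (decode y)
  calc (decode y).take k = ((decode y).take (lcp x (decode y))).take k := by
        rw [List.take_take, Nat.min_eq_left hkL]
    _ = (x.take (lcp x (decode y))).take k := by rw [ht]
    _ = x.take k := by rw [List.take_take, Nat.min_eq_left hkL]
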